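/- arXiv:1102.0431 — 3 statements merged into one kernel-verified Lean document; each statement's English description precedes it below -/
import Mathlib

section
/- Let X be a compact metric space with a continuous flow φ, and f: X → ℝ continuous. Suppose ∫ f dμ > 0 for every φ-invariant Borel probability measure μ on X. Then there exists T > 0 such that the time-T average f_T(x) = (1/T) ∫₀ᵀ f(φ_s(x)) ds is strictly positive for all x ∈ X. -/
/-!
Krylov–Bogolyubov. If no time works, pick for each `n` a point `xₙ` whose average of `f` up to
time `n + 1` is `≤ 0`. The empirical measures of these orbit segments lie in the compact space of
probability measures on `X`, so they converge along an ultrafilter to some `μ`, and `∫ f dμ ≤ 0`.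
Shifting an orbit segment of length `T` by time `t` changes the average of a bounded `g` by at most
`2 |t| ‖g‖ / T`, so `μ` is invariant, contradicting the hypothesis.
-/

open MeasureTheory Filter Topology Set
open scoped BoundedContinuousFunction

theorem abs_intervalIntegral_comp_add_left_sub_le {h : ℝ → ℝ} (hh : Continuous h) {C : ℝ}
    (hC : ∀ s, |h s| ≤ C) (t T : ℝ) :
    |(∫ s in 0..T, h (t + s)) - ∫ s in 0..T, h s| ≤ 2 * |t| * C := by
  have hbound : ∀ a, |∫ s in a..a + t, h s| ≤ C * |t| := fun a => by
    simpa using intervalIntegral.norm_integral_le_of_norm_le_const (a := a) (b := a + t)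
      (f := h) fun s _ => hC s
  rw [intervalIntegral.integral_comp_add_left, add_zero,
    intervalIntegral.integral_interval_sub_interval_comm' (hh.intervalIntegrable _ _)
      (hh.intervalIntegrable _ _) (hh.intervalIntegrable _ _), add_comm t T]
  calc |(∫ s in T..T + t, h s) - ∫ s in 0..t, h s|
      ≤ |∫ s in T..T + t, h s| + |∫ s in 0..0 + t, h s| := by rw [zero_add]; exact abs_sub _ _
    _ ≤ 2 * |t| * C := by linarith [hbound T, hbound 0]

section TimeAverage

variable {X : Type*} [TopologicalSpace X] [MeasurableSpace X] [BorelSpace X]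
  {φ : ℝ → X → X} (hφ : Continuous fun p : ℝ × X => φ p.1 p.2)

/-- The orbit segment is parametrized by `u ∈ (0, 1]` as `φ (T * u) x`, so that this is a
probability measure for every `T`. -/
noncomputable def timeAverageMeasure (x : X) (T : ℝ) : ProbabilityMeasure X :=
  ⟨(volume.restrict (Ioc (0 : ℝ) 1)).map fun u => φ (T * u) x,
    haveI : IsProbabilityMeasure (volume.restrict (Ioc (0 : ℝ) 1)) := ⟨by simp⟩
    Measure.isProbabilityMeasure_map
      (hφ.comp (by fun_prop : Continuous fun u : ℝ => (T * u, x))).aemeasurable⟩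

theorem integral_timeAverageMeasure {g : X → ℝ} (hg : Continuous g) (x : X) {T : ℝ}
    (hT : T ≠ 0) :
    ∫ y, g y ∂(timeAverageMeasure hφ x T : Measure X) = T⁻¹ * ∫ s in 0..T, g (φ s x) := by
  have horbit : Continuous fun u => φ (T * u) x := by fun_prop
  rw [timeAverageMeasure, ProbabilityMeasure.coe_mk,
    integral_map horbit.aemeasurable hg.aestronglyMeasurable,
    ← intervalIntegral.integral_of_le zero_le_one,
    intervalIntegral.integral_comp_mul_left (fun s => g (φ s x)) hT, mul_zero, mul_one,
    smul_eq_mul]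

theorem abs_integral_comp_sub_integral_timeAverageMeasure_le
    (hφadd : ∀ s t x, φ (s + t) x = φ s (φ t x)) {g : X → ℝ} (hg : Continuous g) {C : ℝ}
    (hC : ∀ y, |g y| ≤ C) (x : X) {T : ℝ} (hT : 0 < T) (t : ℝ) :
    |∫ y, g (φ t y) ∂(timeAverageMeasure hφ x T : Measure X)
        - ∫ y, g y ∂(timeAverageMeasure hφ x T : Measure X)| ≤ 2 * |t| * C / T := by
  have hgt : Continuous fun y => g (φ t y) :=
    hg.comp (hφ.comp (continuous_const.prodMk continuous_id))
  have horbit : Continuous fun s => g (φ s x) :=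
    hg.comp (hφ.comp (continuous_id.prodMk continuous_const))
  rw [integral_timeAverageMeasure hφ hgt x hT.ne', integral_timeAverageMeasure hφ hg x hT.ne',
    ← mul_sub, abs_mul, abs_inv, abs_of_pos hT, div_eq_inv_mul]
  simp_rw [← hφadd]
  exact mul_le_mul_of_nonneg_left (abs_intervalIntegral_comp_add_left_sub_le horbit
    (fun s => hC _) t T) (inv_nonneg.2 hT.le)

theorem map_eq_of_tendsto_timeAverageMeasure [HasOuterApproxClosed X]
    (hφadd : ∀ s t x, φ (s + t) x = φ s (φ t x)) {ι : Type*} {l : Filter ι} [l.NeBot]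
    {x : ι → X} {T : ι → ℝ} (hT : Tendsto T l atTop) {μ : ProbabilityMeasure X}
    (hμ : Tendsto (fun i => timeAverageMeasure hφ (x i) (T i)) l (𝓝 μ)) (t : ℝ) :
    (μ : Measure X).map (φ t) = μ := by
  have hφt : Continuous (φ t) := hφ.comp (continuous_const.prodMk continuous_id)
  refine ext_of_forall_integral_eq_of_IsFiniteMeasure fun g => ?_
  rw [integral_map hφt.aemeasurable g.continuous.aestronglyMeasurable]
  let gt : X →ᵇ ℝ := g.compContinuous ⟨φ t, hφt⟩
  have hdefect : Tendsto (fun i => ∫ y, gt y ∂(timeAverageMeasure hφ (x i) (T i) : Measure X)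
      - ∫ y, g y ∂(timeAverageMeasure hφ (x i) (T i) : Measure X)) l (𝓝 0) := by
    refine squeeze_zero_norm' ?_ ((tendsto_const_nhds (x := 2 * |t| * ‖g‖)).div_atTop hT)
    filter_upwards [hT.eventually_gt_atTop 0] with i hi
    exact abs_integral_comp_sub_integral_timeAverageMeasure_le hφ hφadd g.continuous
      g.norm_coe_le_norm (x i) hi t
  exact sub_eq_zero.1 <| tendsto_nhds_unique
    ((ProbabilityMeasure.tendsto_iff_forall_integral_tendsto.1 hμ gt).sub
      (ProbabilityMeasure.tendsto_iff_forall_integral_tendsto.1 hμ g)) hdefect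

end TimeAverage

theorem exists_positive_time_average_general
    {X : Type*} [MetricSpace X] [CompactSpace X]
    [MeasurableSpace X] [BorelSpace X]
    (φ : ℝ → X → X)
    (hφc : Continuous fun p : ℝ × X => φ p.1 p.2)
    (hφadd : ∀ s t x, φ (s + t) x = φ s (φ t x))
    (f : X → ℝ) (hf : Continuous f)
    (hpos : ∀ μ : Measure X, IsProbabilityMeasure μ →
      (∀ t : ℝ, Measure.map (φ t) μ = μ) → 0 < ∫ x, f x ∂μ) :
    ∃ T : ℝ, 0 < T ∧ ∀ x : X,
      0 < (1 / T) * ∫ s in (0:ℝ)..T, f (φ s x) := by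
  by_contra! h
  choose x hx using fun n : ℕ => h (n + 1) n.cast_add_one_pos
  let 𝒰 : Ultrafilter ℕ := .of atTop
  obtain ⟨μ, -, hμ⟩ := isCompact_univ.ultrafilter_le_nhds
    (𝒰.map fun n => timeAverageMeasure hφc (x n) (n + 1)) (by simp)
  have hT : Tendsto (fun n : ℕ => (n : ℝ) + 1) 𝒰 atTop :=
    (tendsto_natCast_atTop_atTop.atTop_add tendsto_const_nhds).mono_left (Ultrafilter.of_le _)
  have hf_avg := ProbabilityMeasure.tendsto_iff_forall_integral_tendsto.1 hμ
    (BoundedContinuousFunction.mkOfCompact ⟨f, hf⟩)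
  refine (hpos μ inferInstance (map_eq_of_tendsto_timeAverageMeasure hφc hφadd hT hμ)).not_ge
    (le_of_tendsto' hf_avg fun n => ?_)
  simpa [integral_timeAverageMeasure hφc hf, n.cast_add_one_ne_zero] using hx n

/-- If every flow-invariant Borel probability measure gives `f` a positive
integral, then some time-T average of `f` is strictly positive everywhere. -/
theorem exists_positive_time_average
    {X : Type*} [MetricSpace X] [CompactSpace X]
    [MeasurableSpace X] [BorelSpace X]
    (φ : ℝ → X → X)
    (hφc : Continuous fun p : ℝ × X => φ p.1 p.2)
    (hφ0 : ∀ x, φ 0 x = x)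
    (hφadd : ∀ s t x, φ (s + t) x = φ s (φ t x))
    (f : X → ℝ) (hf : Continuous f)
    (hpos : ∀ μ : Measure X, IsProbabilityMeasure μ →
      (∀ t : ℝ, Measure.map (φ t) μ = μ) → 0 < ∫ x, f x ∂μ) :
    ∃ T : ℝ, 0 < T ∧ ∀ x : X,
      0 < (1 / T) * ∫ s in (0:ℝ)..T, f (φ s x) :=
  exists_positive_time_average_general φ hφc hφadd f hf hpos
end

section
/- Let E be Minkowski space ℝ^{2,1} (ℝ³ with the form ⟨v,v⟩ = v₁² + v₂² − v₃²) and Γ a group acting on E × V by (p,v) ↦ (γ(p), L(γ)v) for isometries γ of E. If the geodesic through (p, v) with v timelike (⟨v,v⟩ = −1) has the property that Γ acts properly on the hyperboloid S_{−1} = {v : ⟨v,v⟩ = −1} via linear parts, and Γ is infinite discrete, then the induced geodesic flow on (E × S_{−1})/Γ has no recurrent orbits: no timelike geodesic in the quotient flat Lorentz manifold M = E/Γ is recurrent. -/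
/-!
If `γₙ (p + tₙ v) → p` and `L(γₙ) v → v`, properness of the linear action on the hyperboloid
forces the `γₙ` to range over a finite set. Then `p + tₙ v = γₙ⁻¹ (γₙ (p + tₙ v))` stays in the
union of finitely many images of a compact set, which is impossible as `tₙ → ∞` and `v ≠ 0`.
-/

open Filter Topology Bornology

theorem finite_range_of_proper_of_tendsto {X Γ : Type*} [TopologicalSpace X]
    (act : Γ → X → X) {S : Set X}
    (hproper : ∀ K, IsCompact K → K ⊆ S → {g | (act g '' K ∩ K).Nonempty}.Finite)
    {γ : ℕ → Γ} {w : X} (hw : w ∈ S) (hS : ∀ n, act (γ n) w ∈ S)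
    (hlim : Tendsto (fun n => act (γ n) w) atTop (𝓝 w)) :
    (Set.range γ).Finite := by
  refine (hproper _ hlim.isCompact_insert_range ?_).subset ?_
  · rintro _ (rfl | ⟨n, rfl⟩)
    exacts [hw, hS n]
  · rintro _ ⟨n, rfl⟩
    exact ⟨act (γ n) w, ⟨w, Set.mem_insert _ _, rfl⟩, Set.mem_insert_of_mem _ ⟨n, rfl⟩⟩

theorem exists_isCompact_forall_mem_of_tendsto_of_finite_range {X Γ : Type*}
    [TopologicalSpace X] (f : Γ → X ≃ₜ X) {γ : ℕ → Γ} (hγ : (Set.range γ).Finite)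
    {y : ℕ → X} {x : X} (hlim : Tendsto (fun n => f (γ n) (y n)) atTop (𝓝 x)) :
    ∃ K, IsCompact K ∧ ∀ n, y n ∈ K :=
  ⟨⋃ g ∈ Set.range γ, (f g).symm '' insert x (Set.range fun n => f (γ n) (y n)),
    hγ.isCompact_biUnion fun g _ => hlim.isCompact_insert_range.image (f g).symm.continuous,
    fun n => Set.mem_biUnion ⟨n, rfl⟩ ⟨_, Set.mem_insert_of_mem _ ⟨n, rfl⟩, by simp⟩⟩

theorem tendsto_add_smul_cobounded {E α : Type*} [NormedAddCommGroup E] [NormedSpace ℝ E]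
    {l : Filter α} {t : α → ℝ} (ht : Tendsto t l atTop) (p : E) {v : E} (hv : v ≠ 0) :
    Tendsto (fun a => p + t a • v) l (cobounded E) := by
  rw [← tendsto_norm_atTop_iff_cobounded]
  have hlower : ∀ a, t a * ‖v‖ - ‖p‖ ≤ ‖p + t a • v‖ := fun a =>
    calc t a * ‖v‖ - ‖p‖ ≤ ‖t a • v‖ - ‖p‖ := by
          rw [norm_smul]; gcongr; exact Real.le_norm_self _
      _ ≤ ‖p + t a • v‖ := by
          have := norm_sub_le (p + t a • v) p
          rw [add_sub_cancel_left] at this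
          linarith
  exact tendsto_atTop_mono hlower <| tendsto_atTop_add_const_right _ _ <|
    ht.atTop_mul_const (norm_pos_iff.mpr hv)

theorem no_recurrent_timelike_geodesics_general
    {Γ : Type*} [Group Γ]
    (Q : (Fin 3 → ℝ) → ℝ)
    (hQ : ∀ v : Fin 3 → ℝ, Q v = v 0 ^ 2 + v 1 ^ 2 - v 2 ^ 2)
    (ρ : Γ →* ((Fin 3 → ℝ) ≃ᵃ[ℝ] (Fin 3 → ℝ)))
    (hisom : ∀ (γ : Γ) (v : Fin 3 → ℝ), Q ((ρ γ).linear v) = Q v)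
    (hproper : ∀ K : Set (Fin 3 → ℝ), IsCompact K → K ⊆ {v | Q v = -1} →
      {γ : Γ | (((ρ γ).linear : (Fin 3 → ℝ) → (Fin 3 → ℝ)) '' K ∩ K).Nonempty}.Finite)
    (p v : Fin 3 → ℝ) (hv : Q v = -1) :
    ¬ ∃ (t : ℕ → ℝ) (γ : ℕ → Γ),
        Tendsto t atTop atTop ∧
        Tendsto (fun n => ((ρ (γ n)) (p + t n • v), ((ρ (γ n)).linear v))) atTop
          (nhds (p, v)) := by
  rintro ⟨t, γ, ht, hlim⟩
  have hv0 : v ≠ 0 := by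
    rintro rfl
    norm_num [hQ] at hv
  have hγ : (Set.range γ).Finite :=
    finite_range_of_proper_of_tendsto (fun g => (ρ g).linear) hproper hv
      (fun n => (hisom _ _).trans hv) hlim.snd_nhds
  obtain ⟨K, hK, hmem⟩ := exists_isCompact_forall_mem_of_tendsto_of_finite_range
    (fun g => (ρ g).toContinuousAffineEquiv.toHomeomorph) hγ hlim.fst_nhds
  obtain ⟨n, hn⟩ := ((tendsto_add_smul_cobounded ht p hv0).eventually
    (isBounded_def.mp hK.isBounded)).exists
  exact hn (hmem n)

/-- In Minkowski space `ℝ^{2,1}`, if the linear parts of an infinite discrete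
group `Γ` of Lorentz isometries act properly on the hyperboloid `S₋₁`, then the geodesic flow
on `(E × S₋₁)/Γ` has no recurrent orbits: no timelike geodesic of `M = E/Γ` is recurrent. -/
theorem no_recurrent_timelike_geodesics
    {Γ : Type*} [Group Γ] [Infinite Γ]
    (Q : (Fin 3 → ℝ) → ℝ)
    (hQ : ∀ v : Fin 3 → ℝ, Q v = v 0 ^ 2 + v 1 ^ 2 - v 2 ^ 2)
    (ρ : Γ →* ((Fin 3 → ℝ) ≃ᵃ[ℝ] (Fin 3 → ℝ)))
    (hisom : ∀ (γ : Γ) (v : Fin 3 → ℝ), Q ((ρ γ).linear v) = Q v)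
    (hρinj : Function.Injective ρ)
    (hproper : ∀ K : Set (Fin 3 → ℝ), IsCompact K → K ⊆ {v | Q v = -1} →
      {γ : Γ | (((ρ γ).linear : (Fin 3 → ℝ) → (Fin 3 → ℝ)) '' K ∩ K).Nonempty}.Finite)
    (p v : Fin 3 → ℝ) (hv : Q v = -1) :
    ¬ ∃ (t : ℕ → ℝ) (γ : ℕ → Γ),
        Tendsto t atTop atTop ∧
        Tendsto (fun n => ((ρ (γ n)) (p + t n • v), ((ρ (γ n)).linear v))) atTop
          (nhds (p, v)) :=
  no_recurrent_timelike_geodesics_general Q hQ ρ hisom hproper p v hv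
end

section
/- Let X be a compact metric space with a continuous flow φ and f: X → ℝ continuous with ∫ f dμ > 0 for every φ-invariant Borel probability measure μ. Then there exist T > 0 and c > 0 such that for all x ∈ X, ∫₀ᵀ f(φ_s(x)) ds ≥ c T. -/
/-!
Krylov–Bogolyubov. If the conclusion failed, there would be points `xₙ` whose orbit averages
`Tₙ⁻¹ ∫₀^{Tₙ} f(φ_s xₙ) ds` over times `Tₙ → ∞` tend to a value `≤ 0`. The corresponding
empirical measures on the orbit segments have a weak-* limit point `ν` by compactness of the
space of probability measures. Shifting an orbit segment of length `T` by time `t` changes an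
integral over it by at most `2 |t| ‖g‖`, which is negligible after dividing by `T`, so `ν` is
flow-invariant, while `∫ f dν ≤ 0`.
-/

open MeasureTheory Filter Topology

open scoped BoundedContinuousFunction

theorem norm_intervalIntegral_comp_add_right_sub_le {E : Type*} [NormedAddCommGroup E]
    [NormedSpace ℝ E] {G : ℝ → E} (hG : Continuous G) {C : ℝ} (hC : ∀ s, ‖G s‖ ≤ C)
    (T t : ℝ) :
    ‖(∫ s in (0 : ℝ)..T, G (s + t)) - ∫ s in (0 : ℝ)..T, G s‖ ≤ 2 * |t| * C := by
  have hint : ∀ a b : ℝ, IntervalIntegrable G volume a b := fun a b => hG.intervalIntegrable a b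
  have hend : ∀ a, ‖∫ s in a..a + t, G s‖ ≤ C * |t| := fun a => by
    simpa using intervalIntegral.norm_integral_le_of_norm_le_const (a := a) (b := a + t)
      fun s _ => hC s
  rw [intervalIntegral.integral_comp_add_right G t, zero_add,
    intervalIntegral.integral_interval_sub_interval_comm' (hint _ _) (hint _ _) (hint _ _)]
  calc ‖(∫ s in T..T + t, G s) - ∫ s in (0 : ℝ)..t, G s‖
      ≤ ‖∫ s in T..T + t, G s‖ + ‖∫ s in (0 : ℝ)..0 + t, G s‖ := by
        rw [zero_add]; exact norm_sub_le _ _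
    _ ≤ 2 * |t| * C := by linarith [hend T, hend 0]

section OrbitAverage

variable {X : Type*} [MeasurableSpace X]

/-- The time average `T⁻¹ ∫₀ᵀ δ_{φ s x} ds` of Dirac masses along the orbit segment of `x`. -/
noncomputable def orbitAverage (φ : ℝ → X → X) (x : X) (T : ℝ) : Measure X :=
  (ENNReal.ofReal T⁻¹ • volume.restrict (Set.Ioc 0 T)).map fun s => φ s x

variable {φ : ℝ → X → X} {x : X} {T : ℝ}

theorem isProbabilityMeasure_orbitAverage (hx : Measurable fun s => φ s x) (hT : 0 < T) :
    IsProbabilityMeasure (orbitAverage φ x T) := by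
  constructor
  rw [orbitAverage, Measure.map_apply hx MeasurableSet.univ, Set.preimage_univ,
    Measure.smul_apply, Measure.restrict_apply_univ, Real.volume_Ioc, sub_zero, smul_eq_mul,
    ← ENNReal.ofReal_mul (by positivity), inv_mul_cancel₀ hT.ne', ENNReal.ofReal_one]

variable [TopologicalSpace X] [BorelSpace X]

theorem integral_orbitAverage (hx : Continuous fun s => φ s x) (hT : 0 < T) (g : X →ᵇ ℝ) :
    ∫ y, g y ∂orbitAverage φ x T = T⁻¹ * ∫ s in (0 : ℝ)..T, g (φ s x) := by
  rw [orbitAverage, integral_map hx.aemeasurable g.continuous.aestronglyMeasurable,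
    integral_smul_measure, intervalIntegral.integral_of_le hT.le,
    ENNReal.toReal_ofReal (by positivity), smul_eq_mul]

end OrbitAverage

section KrylovBogolyubov

variable {X : Type*} [TopologicalSpace X] [MeasurableSpace X] [BorelSpace X]
  {φ : ℝ → X → X}

theorem norm_integral_orbitAverage_comp_sub_le (hφc : Continuous fun p : ℝ × X => φ p.1 p.2)
    (hφadd : ∀ s t x, φ (s + t) x = φ s (φ t x)) {T : ℝ} (hT : 0 < T) (x : X) (g : X →ᵇ ℝ)
    (t : ℝ) :
    ‖∫ y, g (φ t y) ∂orbitAverage φ x T - ∫ y, g y ∂orbitAverage φ x T‖ ≤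
      T⁻¹ * (2 * |t| * ‖g‖) := by
  have horb : Continuous fun s => φ s x := hφc.comp (Continuous.prodMk_left x)
  have hshift := integral_orbitAverage horb hT
    (g.compContinuous ⟨φ t, hφc.comp (Continuous.prodMk_right t)⟩)
  simp only [BoundedContinuousFunction.compContinuous_apply, ContinuousMap.coe_mk] at hshift
  rw [hshift, integral_orbitAverage horb hT, ← mul_sub, norm_mul,
    Real.norm_of_nonneg (inv_nonneg.2 hT.le)]
  gcongr
  have hflow : ∀ s, g (φ t (φ s x)) = g (φ (s + t) x) := fun s => by rw [add_comm, hφadd]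
  simpa only [hflow] using norm_intervalIntegral_comp_add_right_sub_le
    (G := fun s => g (φ s x)) (g.continuous.comp horb) (fun s => g.norm_coe_le_norm _) T t

theorem map_eq_of_tendsto_integral_orbitAverage [TopologicalSpace.PseudoMetrizableSpace X]
    (hφc : Continuous fun p : ℝ × X => φ p.1 p.2) (hφadd : ∀ s t x, φ (s + t) x = φ s (φ t x))
    {ι : Type*} {l : Filter ι} [l.NeBot] {x : ι → X} {T : ι → ℝ} (hT : Tendsto T l atTop)
    {ν : Measure X} [IsFiniteMeasure ν]
    (hν : ∀ g : X →ᵇ ℝ,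
      Tendsto (fun i => ∫ y, g y ∂orbitAverage φ (x i) (T i)) l (𝓝 (∫ y, g y ∂ν)))
    (t : ℝ) : ν.map (φ t) = ν := by
  have hφt : Continuous (φ t) := hφc.comp (Continuous.prodMk_right t)
  refine ext_of_forall_integral_eq_of_IsFiniteMeasure fun g => ?_
  rw [integral_map hφt.aemeasurable g.continuous.aestronglyMeasurable]
  have hshift : Tendsto (fun i => ∫ y, g (φ t y) ∂orbitAverage φ (x i) (T i) -
      ∫ y, g y ∂orbitAverage φ (x i) (T i)) l (𝓝 0) := by
    have hbound : Tendsto (fun i => (T i)⁻¹ * (2 * |t| * ‖g‖)) l (𝓝 0) := by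
      simpa using (tendsto_inv_atTop_zero.comp hT).mul_const (2 * |t| * ‖g‖)
    refine squeeze_zero_norm' ?_ hbound
    filter_upwards [hT.eventually_gt_atTop 0] with i hi
    exact norm_integral_orbitAverage_comp_sub_le hφc hφadd hi (x i) g t
  exact sub_eq_zero.1 <|
    tendsto_nhds_unique ((hν (g.compContinuous ⟨φ t, hφt⟩)).sub (hν g)) hshift

theorem exists_invariant_tendsto_integral_orbitAverage [CompactSpace X]
    [TopologicalSpace.MetrizableSpace X]
    (hφc : Continuous fun p : ℝ × X => φ p.1 p.2) (hφadd : ∀ s t x, φ (s + t) x = φ s (φ t x))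
    (x : ℕ → X) {T : ℕ → ℝ} (hT : Tendsto T atTop atTop) (hTpos : ∀ n, 0 < T n) :
    ∃ (ν : Measure X) (_ : IsProbabilityMeasure ν) (ψ : ℕ → ℕ), StrictMono ψ ∧
      (∀ t, ν.map (φ t) = ν) ∧ ∀ g : X →ᵇ ℝ,
        Tendsto (fun k => ∫ y, g y ∂orbitAverage φ (x (ψ k)) (T (ψ k))) atTop
          (𝓝 (∫ y, g y ∂ν)) := by
  let μ : ℕ → ProbabilityMeasure X := fun n => ⟨orbitAverage φ (x n) (T n),
    isProbabilityMeasure_orbitAverage (hφc.comp (Continuous.prodMk_left (x n))).measurable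
      (hTpos n)⟩
  obtain ⟨ν, ψ, hψ, hlim⟩ := CompactSpace.tendsto_subseq μ
  have hν := ProbabilityMeasure.tendsto_iff_forall_integral_tendsto.1 hlim
  exact ⟨ν, inferInstance, ψ, hψ,
    map_eq_of_tendsto_integral_orbitAverage hφc hφadd (hT.comp hψ.tendsto_atTop) hν, hν⟩

end KrylovBogolyubov

theorem uniform_positive_birkhoff_integral_general
    {X : Type*} [MetricSpace X] [CompactSpace X]
    [MeasurableSpace X] [BorelSpace X]
    (φ : ℝ → X → X)
    (hφc : Continuous fun p : ℝ × X => φ p.1 p.2)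
    (hφadd : ∀ s t x, φ (s + t) x = φ s (φ t x))
    (f : X → ℝ) (hf : Continuous f)
    (hpos : ∀ μ : Measure X, IsProbabilityMeasure μ →
      (∀ t : ℝ, Measure.map (φ t) μ = μ) → 0 < ∫ x, f x ∂μ) :
    ∃ T c : ℝ, 0 < T ∧ 0 < c ∧
      ∀ x : X, c * T ≤ ∫ s in (0:ℝ)..T, f (φ s x) := by
  by_contra! hbad
  have hsmall : ∀ n : ℕ, ∃ x, ∫ s in (0 : ℝ)..n + 1, f (φ s x) < 1 := fun n => by
    have hn : (0 : ℝ) < n + 1 := by positivity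
    simpa [inv_mul_cancel₀ hn.ne'] using hbad _ _ hn (inv_pos.2 hn)
  choose x hx using hsmall
  have hT : Tendsto (fun n : ℕ => (n : ℝ) + 1) atTop atTop :=
    tendsto_atTop_add_const_right _ 1 tendsto_natCast_atTop_atTop
  obtain ⟨ν, hν, ψ, hψ, hinv, hlim⟩ :=
    exists_invariant_tendsto_integral_orbitAverage hφc hφadd x hT fun n => by positivity
  let fB : X →ᵇ ℝ := .mkOfCompact ⟨f, hf⟩
  have hle : ∀ k, ∫ y, fB y ∂orbitAverage φ (x (ψ k)) (ψ k + 1) ≤ ((ψ k : ℝ) + 1)⁻¹ :=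
    fun k => by
      rw [integral_orbitAverage (φ := φ) (hφc.comp (Continuous.prodMk_left _)) (by positivity)]
      exact (mul_le_mul_of_nonneg_left (hx (ψ k)).le (by positivity)).trans_eq (mul_one _)
  have hintegral_nonpos := le_of_tendsto_of_tendsto' (hlim fB)
    (tendsto_inv_atTop_zero.comp (hT.comp hψ.tendsto_atTop)) hle
  exact (hpos ν hν hinv).not_ge hintegral_nonpos

/-- If `∫ f dμ > 0` for every flow-invariant Borel probability measure, then
there are `T > 0` and `c > 0` with `∫₀ᵀ f(φ_s x) ds ≥ c T` for all `x`. -/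
theorem uniform_positive_birkhoff_integral
    {X : Type*} [MetricSpace X] [CompactSpace X]
    [MeasurableSpace X] [BorelSpace X]
    (φ : ℝ → X → X)
    (hφc : Continuous fun p : ℝ × X => φ p.1 p.2)
    (hφ0 : ∀ x, φ 0 x = x)
    (hφadd : ∀ s t x, φ (s + t) x = φ s (φ t x))
    (f : X → ℝ) (hf : Continuous f)
    (hpos : ∀ μ : Measure X, IsProbabilityMeasure μ →
      (∀ t : ℝ, Measure.map (φ t) μ = μ) → 0 < ∫ x, f x ∂μ) :
    ∃ T c : ℝ, 0 < T ∧ 0 < c ∧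
      ∀ x : X, c * T ≤ ∫ s in (0:ℝ)..T, f (φ s x) :=
  uniform_positive_birkhoff_integral_general φ hφc hφadd f hf hpos
end
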